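/- Let I ⊆ 𝒜 = ℝ⟨x,x*⟩ be a left ideal generated by polynomials of degree ≤ d, and let G ⊆ 𝒜^H_d be a subspace with 𝒜^H_d = I^ℓ_d ⊕ G. Then for every D ≥ d, (I + I*)^ℓ_{2D} = [(I^ℓ_d)* 𝒜^H_{2(D−d)} I^ℓ_d] ⊕ [G* 𝒜^H_{2(D−d)} I^ℓ_d] ⊕ [(I^ℓ_d)* 𝒜^H_{2(D−d)} G] (an internal direct sum of subspaces of 𝒜^H_{2D}); consequently 𝒜^H_{2D} = (I + I*)^ℓ_{2D} ⊕ [G* 𝒜^H_{2(D−d)} G]. -/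

import Mathlib

/-!
Write `L = I^ℓ_d`. Since `I` is generated in degree `≤ d`, its elements of degree `≤ k + d` lie in
`𝒜_k (I ∩ 𝒜_d)`: in a sum `∑ w q_w` (`q_w ∈ I ∩ 𝒜_d`) whose top degree cancels, the `q_w`
attached to the longest words have degree `< d`, so a letter of `w` can be moved into `q_w`.
Hence `I^ℓ_{k+d} = 𝒜^H_k L`, so that `I^ℓ_{2D}` and `(I*)^ℓ_{2D}` are the blocks of
`𝒜^H_{2D} = (L* ⊕ G*) 𝒜^H_{2(D-d)} (L ⊕ G)` ending in `L`, resp. starting with `L*`. The four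
blocks are independent: a map acting as `f ⊗ id` on the first `d` letters separates them.

It remains to show `(I + I*)^ℓ_{2D} = I^ℓ_{2D} + (I*)^ℓ_{2D}`. If the top components of `u` and
`v*` (`u, v ∈ I`) cancel in a degree `N > 2D`, the common top component lies in
`𝒜^H_{N-d} L ∩ L* 𝒜^H_{N-d} = L* 𝒜^H_{N-2d} L`, so it is the top component of some `z ∈ I ∩ I*`,
and passing to `u - z`, `v + z*` lowers `N`.
-/

open Matrix

noncomputable section

/-- The free `*`-algebra `ℝ⟨x,x*⟩` on `g` variables: the free algebra on the `2g`
generators `x₁,…,x_g` (`Sum.inl`) and `x₁*,…,x_g*` (`Sum.inr`). -/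
abbrev FA (g : ℕ) := FreeAlgebra ℝ (Fin g ⊕ Fin g)

/-- The involution on the free `*`-algebra: the unique `ℝ`-linear map reversing products
and interchanging `xᵢ` and `xᵢ*`, as a linear map. -/
def fstarL (g : ℕ) : FA g →ₗ[ℝ] FA g :=
  ((MulOpposite.opLinearEquiv ℝ).symm.toLinearMap).comp
    (FreeAlgebra.lift ℝ
      (fun i : Fin g ⊕ Fin g => MulOpposite.op (FreeAlgebra.ι ℝ (Sum.swap i)))).toLinearMap

/-- The involution `p ↦ p*` on the free `*`-algebra. -/
def fstar {g : ℕ} (p : FA g) : FA g := fstarL g p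

/-- A left ideal `I` is real if whenever `∑ᵢ aᵢ* aᵢ ∈ I + I*`, every `aᵢ ∈ I`. -/
def IsRealIdeal {g : ℕ} (I : Submodule (FA g) (FA g)) : Prop :=
  ∀ (r : ℕ) (a : Fin r → FA g),
    (∃ u ∈ I, ∃ w ∈ I, (∑ i, fstar (a i) * a i) = u + fstar w) → ∀ i, a i ∈ I

/-- The real radical: the smallest real left ideal containing `I`. -/
def rr {g : ℕ} (I : Submodule (FA g) (FA g)) : Submodule (FA g) (FA g) :=
  sInf {J | IsRealIdeal J ∧ I ≤ J}

/-- The identification of the free algebra with the monoid algebra on words. -/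
def toMA {g : ℕ} : FA g ≃ₐ[ℝ] MonoidAlgebra ℝ (FreeMonoid (Fin g ⊕ Fin g)) :=
  FreeAlgebra.equivMonoidAlgebraFreeMonoid

/-- `𝒜_d`: the subspace of polynomials of degree at most `d`. -/
def Adeg (g d : ℕ) : Submodule ℝ (FA g) :=
  (MonoidAlgebra.supported ℝ ℝ {w : FreeMonoid (Fin g ⊕ Fin g) | w.length ≤ d}).comap
    (toMA (g := g)).toLinearMap

/-- `𝒜^H_d`: the subspace of homogeneous polynomials of degree `d` (together with `0`). -/
def AdegH (g d : ℕ) : Submodule ℝ (FA g) :=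
  (MonoidAlgebra.supported ℝ ℝ {w : FreeMonoid (Fin g ⊕ Fin g) | w.length = d}).comap
    (toMA (g := g)).toLinearMap

/-- The degree of a polynomial: the maximal length of a word occurring in it
(`0` for the zero polynomial). -/
def deg {g : ℕ} (p : FA g) : ℕ :=
  (toMA (g := g) p).coeff.support.sup FreeMonoid.length

/-- The leading polynomial: the homogeneous component of top degree. -/
def lead {g : ℕ} (p : FA g) : FA g :=
  (toMA (g := g)).symm (MonoidAlgebra.ofCoeff ((toMA (g := g) p).coeff.filter (fun w => FreeMonoid.length w = deg p)))

/-- `V^ℓ_d`: the span of leading polynomials of all degree-`d` elements of `V`. -/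
def ellSet {g : ℕ} (V : Submodule ℝ (FA g)) (d : ℕ) : Submodule ℝ (FA g) :=
  Submodule.span ℝ {q | ∃ p ∈ V, p ≠ 0 ∧ deg p = d ∧ q = lead p}

lemma Submodule.exists_linearMap_of_disjoint {K E : Type*} [DivisionRing K] [AddCommGroup E]
    [Module K E] {X Y : Submodule K E} (h : Disjoint X Y) :
    ∃ f : E →ₗ[K] E, (∀ x ∈ X, f x = x) ∧ Y ≤ LinearMap.ker f ∧ LinearMap.range f ≤ X := by
  obtain ⟨C, hYC, hC⟩ := h.symm.exists_isCompl
  exact ⟨X.projection C hC.symm, fun x hx => Submodule.projection_apply_of_mem_left _ hx,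
    fun y hy => (Submodule.projection_apply_eq_zero_iff _).2 (hYC hy),
    (Submodule.range_projection _).le⟩

lemma Submodule.mul_le_restrictScalars {R A : Type*} [CommSemiring R] [Semiring A] [Algebra R A]
    {J : Submodule A A} {X Y : Submodule R A} (hY : Y ≤ J.restrictScalars R) :
    X * Y ≤ J.restrictScalars R :=
  Submodule.mul_le.2 fun x _ _ hy => Ideal.mul_mem_left J x (hY hy)

namespace FA

open scoped Classical

variable {g : ℕ}

section Coefficients

abbrev Word (g : ℕ) := FreeMonoid (Fin g ⊕ Fin g)

abbrev wordBasis (g : ℕ) : Module.Basis (Word g) ℝ (FA g) :=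
  FreeAlgebra.basisFreeMonoid ℝ (Fin g ⊕ Fin g)

def coeff (p : FA g) (w : Word g) : ℝ := (wordBasis g).repr p w

lemma coeff_eq_toMA (p : FA g) (w : Word g) : coeff p w = (toMA p).coeff w := rfl

@[simp] lemma coeff_zero (w : Word g) : coeff (0 : FA g) w = 0 := by
  simp [coeff]

@[simp] lemma coeff_wordBasis (u w : Word g) :
    coeff (wordBasis g u) w = if u = w then 1 else 0 := by
  simp [coeff, Finsupp.single_apply]

lemma coeff_sum {ι : Type*} (s : Finset ι) (f : ι → FA g) (w : Word g) :
    coeff (∑ i ∈ s, f i) w = ∑ i ∈ s, coeff (f i) w := by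
  simp [coeff, Finsupp.finsetSum_apply]

lemma ext_coeff {p q : FA g} (h : ∀ w, coeff p w = coeff q w) : p = q :=
  (wordBasis g).repr.injective (Finsupp.ext h)

lemma wordBasis_mul (u v : Word g) : wordBasis g (u * v) = wordBasis g u * wordBasis g v := by
  simp [FreeAlgebra.basisFreeMonoid, ← map_mul, MonoidAlgebra.single_mul_single]

lemma wordBasis_eq_lift (w : Word g) : wordBasis g w = FreeMonoid.lift (FreeAlgebra.ι ℝ) w := by
  simp [FreeAlgebra.basisFreeMonoid, FreeAlgebra.equivMonoidAlgebraFreeMonoid]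

lemma Word.eq_and_eq_of_mul_eq_mul {u v u' v' : Word g} (h : u * v = u' * v')
    (hl : u.length = u'.length) : u = u' ∧ v = v' := by
  obtain ⟨h₁, h₂⟩ := List.append_inj (congrArg FreeMonoid.toList h) hl
  exact ⟨FreeMonoid.toList.injective h₁, FreeMonoid.toList.injective h₂⟩

lemma Word.exists_eq_mul {w : Word g} {a : ℕ} (h : a ≤ w.length) :
    ∃ u v : Word g, w = u * v ∧ u.length = a :=
  ⟨FreeMonoid.ofList (w.toList.take a), FreeMonoid.ofList (w.toList.drop a),
    (List.take_append_drop a w.toList).symm, List.length_take_of_le h⟩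

lemma coeff_mul (p q : FA g) (z : Word g) :
    coeff (p * q) z = ∑ u ∈ ((wordBasis g).repr p).support, ∑ v ∈ ((wordBasis g).repr q).support,
      if u * v = z then coeff p u * coeff q v else 0 := by
  simp only [coeff_eq_toMA, map_mul, MonoidAlgebra.coeff_mul, Finsupp.sum]
  rfl

lemma exists_of_coeff_mul_ne_zero {p q : FA g} {z : Word g} (h : coeff (p * q) z ≠ 0) :
    ∃ u v, u * v = z ∧ coeff p u ≠ 0 ∧ coeff q v ≠ 0 := by
  rw [coeff_mul] at h
  obtain ⟨u, hu, h⟩ := Finset.exists_ne_zero_of_sum_ne_zero h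
  obtain ⟨v, hv, h⟩ := Finset.exists_ne_zero_of_sum_ne_zero h
  exact ⟨u, v, by_contra fun huv => h (if_neg huv), Finsupp.mem_support_iff.1 hu,
    Finsupp.mem_support_iff.1 hv⟩

end Coefficients

section Degree

lemma mem_Adeg_iff {p : FA g} {n : ℕ} : p ∈ Adeg g n ↔ ∀ w, coeff p w ≠ 0 → w.length ≤ n := by
  simp [Adeg, MonoidAlgebra.mem_supported, Set.subset_def, coeff_eq_toMA]

lemma mem_AdegH_iff {p : FA g} {n : ℕ} : p ∈ AdegH g n ↔ ∀ w, coeff p w ≠ 0 → w.length = n := by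
  simp [AdegH, MonoidAlgebra.mem_supported, Set.subset_def, coeff_eq_toMA]

lemma length_le_of_mem_Adeg {p : FA g} {n : ℕ} (hp : p ∈ Adeg g n) {w : Word g}
    (hw : coeff p w ≠ 0) : w.length ≤ n :=
  mem_Adeg_iff.1 hp w hw

lemma AdegH_eq_span (n : ℕ) : AdegH g n = Submodule.span ℝ (wordBasis g '' {w | w.length = n}) := by
  ext p
  rw [(wordBasis g).mem_span_image, mem_AdegH_iff]
  simp [Set.subset_def, coeff]

lemma wordBasis_mem_AdegH (w : Word g) : wordBasis g w ∈ AdegH g w.length :=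
  AdegH_eq_span _ ▸ Submodule.subset_span ⟨w, rfl, rfl⟩

lemma one_mem_AdegH_zero : (1 : FA g) ∈ AdegH g 0 := by
  simpa [wordBasis_eq_lift] using wordBasis_mem_AdegH (1 : Word g)

lemma mem_Adeg_deg (p : FA g) : p ∈ Adeg g (deg p) :=
  mem_Adeg_iff.2 fun _ hw => Finset.le_sup (f := FreeMonoid.length) (Finsupp.mem_support_iff.2 hw)

lemma AdegH_le_Adeg (n : ℕ) : AdegH g n ≤ Adeg g n := fun _ hp =>
  mem_Adeg_iff.2 fun w hw => (mem_AdegH_iff.1 hp w hw).le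

lemma Adeg_mono {m n : ℕ} (h : m ≤ n) : Adeg g m ≤ Adeg g n := fun _ hp =>
  mem_Adeg_iff.2 fun w hw => (mem_Adeg_iff.1 hp w hw).trans h

lemma coeff_mul_of_mem_Adeg {p q : FA g} {a b : ℕ} (hp : p ∈ Adeg g a) (hq : q ∈ Adeg g b)
    {u v : Word g} (hu : u.length = a) (hv : v.length = b) :
    coeff (p * q) (u * v) = coeff p u * coeff q v := by
  have key : ∀ u' v', coeff p u' ≠ 0 → coeff q v' ≠ 0 → (u' * v' = u * v ↔ u' = u ∧ v' = v) := by
    intro u' v' hu' hv'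
    refine ⟨fun h => Word.eq_and_eq_of_mul_eq_mul h ?_, fun ⟨h₁, h₂⟩ => h₁ ▸ h₂ ▸ rfl⟩
    have := congrArg FreeMonoid.length h
    simp only [FreeMonoid.length_mul] at this
    have := length_le_of_mem_Adeg hp hu'
    have := length_le_of_mem_Adeg hq hv'
    omega
  rw [coeff_mul]
  calc _ = ∑ u' ∈ ((wordBasis g).repr p).support, ∑ v' ∈ ((wordBasis g).repr q).support,
        if u' = u ∧ v' = v then coeff p u' * coeff q v' else 0 :=
      Finset.sum_congr rfl fun u' hu' => Finset.sum_congr rfl fun v' hv' =>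
        if_congr (key u' v' (Finsupp.mem_support_iff.1 hu') (Finsupp.mem_support_iff.1 hv')) rfl rfl
    _ = _ := by
      simp only [ite_and, Finset.sum_ite_irrel, Finset.sum_ite_eq', Finsupp.mem_support_iff,
        Finset.sum_const_zero]
      split_ifs <;> simp_all [coeff]

lemma mul_mem_Adeg {p q : FA g} {a b : ℕ} (hp : p ∈ Adeg g a) (hq : q ∈ Adeg g b) :
    p * q ∈ Adeg g (a + b) :=
  mem_Adeg_iff.2 fun z hz => by
    obtain ⟨u, v, rfl, hu, hv⟩ := exists_of_coeff_mul_ne_zero hz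
    have := length_le_of_mem_Adeg hp hu
    have := length_le_of_mem_Adeg hq hv
    rw [FreeMonoid.length_mul]
    omega

lemma mul_mem_AdegH {p q : FA g} {a b : ℕ} (hp : p ∈ AdegH g a) (hq : q ∈ AdegH g b) :
    p * q ∈ AdegH g (a + b) :=
  mem_AdegH_iff.2 fun z hz => by
    obtain ⟨u, v, rfl, hu, hv⟩ := exists_of_coeff_mul_ne_zero hz
    rw [FreeMonoid.length_mul, mem_AdegH_iff.1 hp u hu, mem_AdegH_iff.1 hq v hv]

lemma Adeg_mul_le (a b : ℕ) : Adeg g a * Adeg g b ≤ Adeg g (a + b) :=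
  Submodule.mul_le.2 fun _ hp _ hq => mul_mem_Adeg hp hq

lemma AdegH_mul_AdegH (a b : ℕ) : AdegH g a * AdegH g b = AdegH g (a + b) := by
  refine le_antisymm (Submodule.mul_le.2 fun _ hp _ hq => mul_mem_AdegH hp hq) ?_
  rw [AdegH_eq_span (a + b), Submodule.span_le]
  rintro _ ⟨w, hw, rfl⟩
  obtain ⟨u, v, rfl, hu⟩ := Word.exists_eq_mul (show a ≤ w.length by simp_all)
  have hv : v.length = b := by simp_all [FreeMonoid.length_mul]
  rw [wordBasis_mul]
  exact Submodule.mul_mem_mul (hu ▸ wordBasis_mem_AdegH u) (hv ▸ wordBasis_mem_AdegH v)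

end Degree

section HomogeneousComponent

def homogeneousComponent (n : ℕ) : FA g →ₗ[ℝ] FA g where
  toFun p := (wordBasis g).repr.symm (((wordBasis g).repr p).filter fun w => w.length = n)
  map_add' p q := by simp [Finsupp.filter_add]
  map_smul' c p := by simp [Finsupp.filter_smul]

@[simp] lemma coeff_homogeneousComponent (n : ℕ) (p : FA g) (w : Word g) :
    coeff (homogeneousComponent n p) w = if w.length = n then coeff p w else 0 := by
  simp [homogeneousComponent, coeff, Finsupp.filter_apply]

lemma lead_eq_homogeneousComponent (p : FA g) : lead p = homogeneousComponent (deg p) p := rfl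

lemma homogeneousComponent_mem (n : ℕ) (p : FA g) : homogeneousComponent n p ∈ AdegH g n :=
  mem_AdegH_iff.2 fun w hw => by
    by_contra h
    simp [h] at hw

lemma homogeneousComponent_of_mem {n : ℕ} {p : FA g} (hp : p ∈ AdegH g n) :
    homogeneousComponent n p = p :=
  ext_coeff fun w => by
    rw [coeff_homogeneousComponent, ite_eq_left_iff]
    exact fun h => by_contra fun hw => h (mem_AdegH_iff.1 hp w (Ne.symm hw))

lemma homogeneousComponent_eq_zero {m n : ℕ} {p : FA g} (hp : p ∈ Adeg g m) (h : m < n) :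
    homogeneousComponent n p = 0 :=
  ext_coeff fun w => by
    rw [coeff_homogeneousComponent, coeff_zero, ite_eq_right_iff]
    exact fun hw => by_contra fun hne => by have := length_le_of_mem_Adeg hp hne; omega

lemma mem_Adeg_of_homogeneousComponent_eq_zero {n : ℕ} {p : FA g} (hp : p ∈ Adeg g (n + 1))
    (h : homogeneousComponent (n + 1) p = 0) : p ∈ Adeg g n :=
  mem_Adeg_iff.2 fun w hw => by
    have hw' : w.length ≠ n + 1 := fun hl => hw <| by
      simpa [hl] using congrArg (coeff · w) h
    have := length_le_of_mem_Adeg hp hw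
    omega

lemma Adeg_succ (n : ℕ) : Adeg g (n + 1) = AdegH g (n + 1) ⊔ Adeg g n := by
  refine le_antisymm (fun p hp => Submodule.mem_sup.2 ?_)
    (sup_le (AdegH_le_Adeg _) (Adeg_mono n.le_succ))
  have hC := homogeneousComponent_mem (n + 1) p
  refine ⟨_, hC, p - homogeneousComponent (n + 1) p, ?_, add_sub_cancel _ _⟩
  refine mem_Adeg_of_homogeneousComponent_eq_zero (sub_mem hp (AdegH_le_Adeg _ hC)) ?_
  rw [map_sub, homogeneousComponent_of_mem hC, sub_self]

lemma map_homogeneousComponent_Adeg (n : ℕ) :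
    (Adeg g n).map (homogeneousComponent n) = AdegH g n :=
  le_antisymm (Submodule.map_le_iff_le_comap.2 fun p _ => homogeneousComponent_mem n p)
    fun p hp => ⟨p, AdegH_le_Adeg n hp, homogeneousComponent_of_mem hp⟩

lemma homogeneousComponent_mul {p q : FA g} {a b : ℕ} (hp : p ∈ Adeg g a) (hq : q ∈ Adeg g b) :
    homogeneousComponent (a + b) (p * q) =
      homogeneousComponent a p * homogeneousComponent b q := by
  have hpa := homogeneousComponent_mem a p
  have hqb := homogeneousComponent_mem b q
  refine ext_coeff fun z => ?_
  by_cases hz : z.length = a + b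
  · obtain ⟨u, v, rfl, hu⟩ := Word.exists_eq_mul (show a ≤ z.length by omega)
    have hv : v.length = b := by simp only [FreeMonoid.length_mul] at hz; omega
    rw [coeff_homogeneousComponent, if_pos hz, coeff_mul_of_mem_Adeg hp hq hu hv,
      coeff_mul_of_mem_Adeg (AdegH_le_Adeg a hpa) (AdegH_le_Adeg b hqb) hu hv]
    simp [hu, hv]
  · rw [coeff_homogeneousComponent, if_neg hz]
    exact by_contra fun h => hz (mem_AdegH_iff.1 (mul_mem_AdegH hpa hqb) z (Ne.symm h))

lemma map_homogeneousComponent_mul {X Y : Submodule ℝ (FA g)} {a b : ℕ} (hX : X ≤ Adeg g a)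
    (hY : Y ≤ Adeg g b) :
    (X * Y).map (homogeneousComponent (a + b)) =
      X.map (homogeneousComponent a) * Y.map (homogeneousComponent b) := by
  rw [Submodule.mul_eq_span_mul_set, Submodule.map_span, Submodule.mul_eq_span_mul_set]
  congr 1
  ext z
  simp only [Set.mem_image, Set.mem_mul, SetLike.mem_coe, Submodule.mem_map]
  constructor
  · rintro ⟨_, ⟨x, hx, y, hy, rfl⟩, rfl⟩
    exact ⟨_, ⟨x, hx, rfl⟩, _, ⟨y, hy, rfl⟩, (homogeneousComponent_mul (hX hx) (hY hy)).symm⟩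
  · rintro ⟨_, ⟨x, hx, rfl⟩, _, ⟨y, hy, rfl⟩, rfl⟩
    exact ⟨_, ⟨x, hx, y, hy, rfl⟩, homogeneousComponent_mul (hX hx) (hY hy)⟩

end HomogeneousComponent

section Star

def Word.star (w : Word g) : Word g := (FreeMonoid.map Sum.swap w).reverse

@[simp] lemma Word.length_star (w : Word g) : w.star.length = w.length := by
  rw [Word.star, FreeMonoid.length_reverse]
  exact List.length_map _

lemma Word.star_mul (u v : Word g) : (u * v).star = v.star * u.star := by
  simp [Word.star, FreeMonoid.reverse_mul]

lemma Word.star_star (w : Word g) : w.star.star = w := by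
  apply FreeMonoid.toList.injective
  show ((w.toList.map Sum.swap).reverse.map Sum.swap).reverse = w.toList
  simp [List.map_reverse]

lemma fstarL_mul (p q : FA g) : fstarL g (p * q) = fstarL g q * fstarL g p := by
  simp [fstarL]

lemma fstarL_wordBasis (w : Word g) : fstarL g (wordBasis g w) = wordBasis g w.star := by
  induction w using FreeMonoid.inductionOn' with
  | one =>
    show fstarL g (wordBasis g 1) = wordBasis g 1
    simp [fstarL, wordBasis_eq_lift]
  | of_mul x w ih =>
    rw [wordBasis_mul, fstarL_mul, ih, Word.star_mul, wordBasis_mul]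
    congr 1
    simp [fstarL, Word.star, wordBasis_eq_lift]

lemma coeff_fstarL (p : FA g) (w : Word g) : coeff (fstarL g p) w = coeff p w.star := by
  have : Finsupp.lapply w ∘ₗ (wordBasis g).repr.toLinearMap ∘ₗ fstarL g =
      Finsupp.lapply w.star ∘ₗ (wordBasis g).repr.toLinearMap :=
    (wordBasis g).ext fun u => by
      simp only [LinearMap.comp_apply, fstarL_wordBasis, LinearEquiv.coe_coe,
        Module.Basis.repr_self, Finsupp.lapply_apply, Finsupp.single_apply]
      exact if_congr ⟨fun h => by rw [← h, Word.star_star], fun h => by rw [h, Word.star_star]⟩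
        rfl rfl
  exact LinearMap.congr_fun this p

lemma fstarL_fstarL (p : FA g) : fstarL g (fstarL g p) = p :=
  ext_coeff fun w => by rw [coeff_fstarL, coeff_fstarL, Word.star_star]

lemma fstarL_injective : Function.Injective (fstarL g) :=
  Function.LeftInverse.injective fstarL_fstarL

lemma map_fstarL_map_fstarL (X : Submodule ℝ (FA g)) : (X.map (fstarL g)).map (fstarL g) = X := by
  ext p
  simp only [Submodule.mem_map]
  exact ⟨fun ⟨_, ⟨q, hq, rfl⟩, h⟩ => h ▸ (fstarL_fstarL q).symm ▸ hq,
    fun hp => ⟨_, ⟨p, hp, rfl⟩, fstarL_fstarL p⟩⟩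

lemma map_fstarL_eq_of_le {X : Submodule ℝ (FA g)} (h : X.map (fstarL g) ≤ X) :
    X.map (fstarL g) = X :=
  le_antisymm h <| by simpa only [map_fstarL_map_fstarL] using Submodule.map_mono (f := fstarL g) h

lemma map_fstarL_AdegH (n : ℕ) : (AdegH g n).map (fstarL g) = AdegH g n :=
  map_fstarL_eq_of_le <| Submodule.map_le_iff_le_comap.2 fun p hp => mem_AdegH_iff.2 fun w hw => by
    rw [coeff_fstarL] at hw
    simpa using mem_AdegH_iff.1 hp _ hw

lemma map_fstarL_le_AdegH {X : Submodule ℝ (FA g)} {n : ℕ} (hX : X ≤ AdegH g n) :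
    X.map (fstarL g) ≤ AdegH g n :=
  map_fstarL_AdegH (g := g) n ▸ Submodule.map_mono hX

lemma map_fstarL_Adeg (n : ℕ) : (Adeg g n).map (fstarL g) = Adeg g n :=
  map_fstarL_eq_of_le <| Submodule.map_le_iff_le_comap.2 fun p hp => mem_Adeg_iff.2 fun w hw => by
    rw [coeff_fstarL] at hw
    simpa using length_le_of_mem_Adeg hp hw

lemma homogeneousComponent_comp_fstarL (n : ℕ) :
    homogeneousComponent n ∘ₗ fstarL g = fstarL g ∘ₗ homogeneousComponent (g := g) n :=
  LinearMap.ext fun p => ext_coeff fun w => by simp [coeff_fstarL]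

lemma map_fstarL_mul (X Y : Submodule ℝ (FA g)) :
    (X * Y).map (fstarL g) = Y.map (fstarL g) * X.map (fstarL g) := by
  simp only [fstarL, Submodule.map_comp]
  exact (congrArg _ (Submodule.map_mul X Y _)).trans (Submodule.map_unop_mul _ _)

end Star

section LeadingSpace

lemma deg_eq_of_homogeneousComponent_ne_zero {p : FA g} {n : ℕ} (hp : p ∈ Adeg g n)
    (h : homogeneousComponent n p ≠ 0) : deg p = n := by
  refine le_antisymm (Finset.sup_le fun w hw =>
    length_le_of_mem_Adeg hp (Finsupp.mem_support_iff.1 hw)) ?_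
  obtain ⟨w, hw⟩ : ∃ w, coeff (homogeneousComponent n p) w ≠ 0 :=
    not_forall.1 fun h' => h (ext_coeff fun w => by rw [h' w, coeff_zero])
  rw [coeff_homogeneousComponent, ne_eq, ite_eq_right_iff, not_forall] at hw
  obtain ⟨rfl, hw⟩ := hw
  exact Finset.le_sup (f := FreeMonoid.length) (Finsupp.mem_support_iff.2 hw)

lemma ellSet_eq_map (V : Submodule ℝ (FA g)) (n : ℕ) :
    ellSet V n = (V ⊓ Adeg g n).map (homogeneousComponent n) := by
  refine le_antisymm (Submodule.span_le.2 ?_) ?_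
  · rintro _ ⟨p, hpV, -, rfl, rfl⟩
    exact ⟨p, ⟨hpV, mem_Adeg_deg p⟩, rfl⟩
  · rintro _ ⟨p, ⟨hpV, hpn⟩, rfl⟩
    by_cases h : homogeneousComponent n p = 0
    · rw [h]
      exact zero_mem _
    · have hdeg := deg_eq_of_homogeneousComponent_ne_zero hpn h
      exact Submodule.subset_span
        ⟨p, hpV, fun h0 => h (by rw [h0, map_zero]), hdeg,
          by rw [lead_eq_homogeneousComponent, hdeg]⟩

lemma ellSet_le_AdegH (V : Submodule ℝ (FA g)) (n : ℕ) : ellSet V n ≤ AdegH g n := by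
  rw [ellSet_eq_map]
  exact Submodule.map_le_iff_le_comap.2 fun p _ => homogeneousComponent_mem n p

lemma ellSet_map_fstarL (V : Submodule ℝ (FA g)) (n : ℕ) :
    ellSet (V.map (fstarL g)) n = (ellSet V n).map (fstarL g) := by
  rw [ellSet_eq_map, ellSet_eq_map, ← Submodule.map_comp, ← homogeneousComponent_comp_fstarL,
    Submodule.map_comp, Submodule.map_inf _ fstarL_injective, map_fstarL_Adeg]

/-- A cancellation of top components in `u + v` (`u ∈ P`, `v ∈ Q`) is removed by subtracting an
element of `P ∩ Q` with the same top component, lowering the degree of `u` and `v`. -/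
theorem ellSet_sup {P Q : Submodule ℝ (FA g)} {n : ℕ}
    (h : ∀ m, n < m → ellSet P m ⊓ ellSet Q m ≤ ellSet (P ⊓ Q) m) :
    ellSet (P ⊔ Q) n = ellSet P n ⊔ ellSet Q n := by
  simp only [ellSet_eq_map] at h ⊢
  refine le_antisymm ?_ (sup_le (Submodule.map_mono (inf_le_inf_right _ le_sup_left))
    (Submodule.map_mono (inf_le_inf_right _ le_sup_right)))
  have key : ∀ k, ∀ u ∈ P ⊓ Adeg g (n + k), ∀ v ∈ Q ⊓ Adeg g (n + k), u + v ∈ Adeg g n →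
      homogeneousComponent n (u + v) ∈ (P ⊓ Adeg g n).map (homogeneousComponent n) ⊔
        (Q ⊓ Adeg g n).map (homogeneousComponent n) := by
    intro k
    induction k with
    | zero =>
      intro u hu v hv _
      rw [map_add]
      exact Submodule.add_mem_sup ⟨u, hu, rfl⟩ ⟨v, hv, rfl⟩
    | succ k ih =>
      intro u ⟨huP, hu⟩ v ⟨hvQ, hv⟩ huv
      have hcancel : homogeneousComponent (n + k + 1) u = -homogeneousComponent (n + k + 1) v :=
        eq_neg_of_add_eq_zero_left <| by
          rw [← map_add, homogeneousComponent_eq_zero huv (by omega)]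
      obtain ⟨z, ⟨⟨hzP, hzQ⟩, hz⟩, hzu⟩ := h (n + k + 1) (by omega)
        ⟨⟨u, ⟨huP, hu⟩, rfl⟩, hcancel ▸ neg_mem ⟨v, ⟨hvQ, hv⟩, rfl⟩⟩
      have hu' : u - z ∈ Adeg g (n + k) := mem_Adeg_of_homogeneousComponent_eq_zero
        (sub_mem hu hz) (by rw [map_sub, hzu, sub_self])
      have hv' : v + z ∈ Adeg g (n + k) := mem_Adeg_of_homogeneousComponent_eq_zero
        (add_mem hv hz) (by rw [map_add, hzu, hcancel, add_neg_cancel])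
      have := ih (u - z) ⟨sub_mem huP hzP, hu'⟩ (v + z) ⟨add_mem hvQ hzQ, hv'⟩
        (by rwa [sub_add_add_cancel])
      rwa [sub_add_add_cancel] at this
  rintro _ ⟨x, ⟨hx, hxn⟩, rfl⟩
  obtain ⟨u, hu, v, hv, rfl⟩ := Submodule.mem_sup.1 hx
  exact key (deg u + deg v) u ⟨hu, Adeg_mono (by omega) (mem_Adeg_deg u)⟩ v
    ⟨hv, Adeg_mono (by omega) (mem_Adeg_deg v)⟩ hxn

end LeadingSpace

section Prefix

def mapPrefix (f : FA g →ₗ[ℝ] FA g) (d : ℕ) : FA g →ₗ[ℝ] FA g :=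
  (wordBasis g).constr ℝ fun w => f (wordBasis g (FreeMonoid.ofList (w.toList.take d))) *
    wordBasis g (FreeMonoid.ofList (w.toList.drop d))

lemma mapPrefix_mul (f : FA g →ₗ[ℝ] FA g) {d : ℕ} {a : FA g} (ha : a ∈ AdegH g d) (b : FA g) :
    mapPrefix f d (a * b) = f a * b := by
  rw [AdegH_eq_span] at ha
  induction ha using Submodule.span_induction with
  | mem x hx =>
    obtain ⟨u, hu, rfl⟩ := hx
    have : mapPrefix f d ∘ₗ LinearMap.mulLeft ℝ (wordBasis g u) =
        LinearMap.mulLeft ℝ (f (wordBasis g u)) :=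
      (wordBasis g).ext fun v => by
        simp only [LinearMap.comp_apply, LinearMap.mulLeft_apply, ← wordBasis_mul, mapPrefix,
          Module.Basis.constr_basis, FreeMonoid.toList_mul, List.take_left' hu,
          List.drop_left' hu]
        rfl
    exact LinearMap.congr_fun this b
  | zero => simp
  | add x y _ _ hx hy => rw [add_mul, map_add, hx, hy, map_add, add_mul]
  | smul c x _ hx => rw [smul_mul_assoc, map_smul, hx, map_smul, smul_mul_assoc]

variable {f : FA g →ₗ[ℝ] FA g} {d : ℕ} {X Y Z : Submodule ℝ (FA g)} {θ : FA g}

lemma mapPrefix_mem_mul (hX : X ≤ AdegH g d) (hθ : θ ∈ X * Z) : mapPrefix f d θ ∈ X.map f * Z :=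
  Submodule.mul_induction_on hθ
    (fun x hx z hz => by
      rw [mapPrefix_mul f (hX hx)]
      exact Submodule.mul_mem_mul (Submodule.mem_map_of_mem hx) hz)
    fun _ _ hx hy => by
      rw [map_add]
      exact add_mem hx hy

lemma mapPrefix_eq_self (hX : X ≤ AdegH g d) (hf : ∀ x ∈ X, f x = x) (hθ : θ ∈ X * Z) :
    mapPrefix f d θ = θ :=
  Submodule.mul_induction_on hθ (fun x hx _ _ => by rw [mapPrefix_mul f (hX hx), hf x hx])
    fun _ _ hx hy => by rw [map_add, hx, hy]

lemma disjoint_mul_top (hX : X ≤ AdegH g d)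
    (hY : Y ≤ AdegH g d) (h : Disjoint X Y) : Disjoint (X * ⊤) (Y * ⊤) := by
  obtain ⟨f, hfY, hfX, -⟩ := Submodule.exists_linearMap_of_disjoint h.symm
  refine Submodule.disjoint_def.2 fun θ hθX hθY => ?_
  have := mapPrefix_mem_mul (f := f) hX hθX
  rwa [mapPrefix_eq_self hY hfY hθY, (LinearMap.le_ker_iff_map).1 hfX, Submodule.bot_mul,
    Submodule.mem_bot] at this

lemma disjoint_top_mul (hX : X ≤ AdegH g d)
    (hY : Y ≤ AdegH g d) (h : Disjoint X Y) : Disjoint (⊤ * X) (⊤ * Y) := by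
  have := Submodule.disjoint_map fstarL_injective <| disjoint_mul_top (map_fstarL_le_AdegH hX)
    (map_fstarL_le_AdegH hY) (Submodule.disjoint_map fstarL_injective h)
  rwa [map_fstarL_mul, map_fstarL_mul, map_fstarL_map_fstarL, map_fstarL_map_fstarL,
    map_fstarL_eq_of_le le_top] at this

lemma AdegH_mul_inf_mul_top_le (hX : X ≤ AdegH g d) :
    AdegH g d * Z ⊓ X * ⊤ ≤ X * Z := by
  obtain ⟨f, hf, -, hrange⟩ := Submodule.exists_linearMap_of_disjoint (disjoint_bot_right (a := X))
  rintro θ ⟨hθ, hθX⟩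
  rw [← mapPrefix_eq_self hX hf hθX]
  exact mul_le_mul' (Submodule.map_le_iff_le_comap.2 fun x _ => hrange ⟨x, rfl⟩) le_rfl
    (mapPrefix_mem_mul le_rfl hθ)

end Prefix

section Generation

variable {S : Set (FA g)} {d : ℕ}

lemma exists_finsupp_of_mem_AdegH_mul {n : ℕ} {V : Submodule ℝ (FA g)} {y : FA g}
    (hy : y ∈ AdegH g n * V) :
    ∃ ψ : Word g →₀ FA g, (∀ w ∈ ψ.support, w.length = n) ∧ (∀ w, ψ w ∈ V) ∧
      y = ψ.sum fun w q => wordBasis g w * q := by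
  induction hy using Submodule.mul_induction_on' with
  | mem_mul_mem h hh q hq =>
    refine ⟨((wordBasis g).repr h).mapRange (· • q) (zero_smul ℝ q), fun w hw => ?_,
      fun w => V.smul_mem _ hq, ?_⟩
    · exact mem_AdegH_iff.1 hh w (Finsupp.mem_support_iff.1 (Finsupp.support_mapRange hw))
    · rw [Finsupp.sum_mapRange_index fun _ => mul_zero _]
      conv_lhs => rw [← (wordBasis g).linearCombination_repr h, Finsupp.linearCombination_apply,
        Finsupp.sum_mul]
      simp only [smul_mul_assoc, mul_smul_comm]
  | add y _ z _ hy hz =>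
    obtain ⟨ψ, hψn, hψV, rfl⟩ := hy
    obtain ⟨χ, hχn, hχV, rfl⟩ := hz
    refine ⟨ψ + χ, fun w hw => ?_, fun w => add_mem (hψV w) (hχV w),
      (Finsupp.sum_add_index' (fun _ => mul_zero _) fun _ _ _ => mul_add _ _ _).symm⟩
    rcases Finset.mem_union.1 (Finsupp.support_add hw) with hw | hw
    exacts [hψn w hw, hχn w hw]

lemma coeff_finsupp_sum_wordBasis_mul {n : ℕ} {ψ : Word g →₀ FA g}
    (hψn : ∀ w ∈ ψ.support, w.length = n) (hψd : ∀ w, ψ w ∈ Adeg g d) {u v : Word g}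
    (hu : u.length = n) (hv : v.length = d) :
    coeff (ψ.sum fun w q => wordBasis g w * q) (u * v) = coeff (ψ u) v := by
  rw [Finsupp.sum, coeff_sum]
  calc _ = ∑ w ∈ ψ.support, if w = u then coeff (ψ w) v else 0 :=
        Finset.sum_congr rfl fun w hw => by
          rw [coeff_mul_of_mem_Adeg (AdegH_le_Adeg _ (wordBasis_mem_AdegH w)) (hψd w)
            (hu.trans (hψn w hw).symm) hv, coeff_wordBasis]
          split_ifs <;> simp
    _ = _ := by
      rw [Finset.sum_ite_eq']
      split_ifs with h
      · rfl
      · rw [Finsupp.notMem_support_iff.1 h, coeff_zero]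

/-- Top-degree cancellation in `∑ w q_w` (`|w| = n + 1`, `q_w ∈ J`) forces every `q_w` to have
degree `< d`, so the last letter of `w` can be moved into `q_w`. -/
lemma mem_Adeg_mul_of_mem_AdegH_mul (J : Submodule (FA g) (FA g)) {n : ℕ} {y : FA g}
    (hy : y ∈ AdegH g (n + 1) * (J.restrictScalars ℝ ⊓ Adeg g d)) (hyn : y ∈ Adeg g (n + d)) :
    y ∈ Adeg g n * (J.restrictScalars ℝ ⊓ Adeg g d) := by
  obtain ⟨ψ, hψn, hψV, rfl⟩ := exists_finsupp_of_mem_AdegH_mul hy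
  refine Submodule.sum_mem _ fun w hw => ?_
  obtain ⟨u, x, rfl, hu⟩ := Word.exists_eq_mul (show n ≤ w.length by rw [hψn w hw]; omega)
  have hx : x.length = 1 := by
    have := hψn _ hw
    rw [FreeMonoid.length_mul] at this
    omega
  show wordBasis g (u * x) * ψ (u * x) ∈ _
  rw [wordBasis_mul, mul_assoc]
  refine Submodule.mul_mem_mul (AdegH_le_Adeg _ (hu ▸ wordBasis_mem_AdegH u))
    ⟨Ideal.mul_mem_left J _ (hψV _).1, mem_Adeg_iff.2 fun z hz => ?_⟩
  obtain ⟨x', v, rfl, hx', hv⟩ := exists_of_coeff_mul_ne_zero hz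
  obtain rfl : x = x' := by simpa using hx'
  have hvd := length_le_of_mem_Adeg (hψV _).2 hv
  have hvd' : v.length ≠ d := fun hvd' => hv <| by
    rw [← coeff_finsupp_sum_wordBasis_mul hψn (fun w => (hψV w).2) (hψn _ hw) hvd']
    exact by_contra fun h => by
      have := length_le_of_mem_Adeg hyn h
      simp only [FreeMonoid.length_mul] at this
      omega
  rw [FreeMonoid.length_mul]
  omega

lemma exists_mem_Adeg_mul_of_mem_span (hS : ∀ s ∈ S, s ∈ Adeg g d) {p : FA g}
    (hp : p ∈ Submodule.span (FA g) S) :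
    ∃ n, p ∈ Adeg g n * ((Submodule.span (FA g) S).restrictScalars ℝ ⊓ Adeg g d) := by
  induction hp using Submodule.span_induction with
  | mem s hs =>
    have hs' : s ∈ (Submodule.span (FA g) S).restrictScalars ℝ ⊓ Adeg g d :=
      ⟨Submodule.subset_span hs, hS s hs⟩
    exact ⟨0, by simpa using Submodule.mul_mem_mul (AdegH_le_Adeg 0 one_mem_AdegH_zero) hs'⟩
  | zero => exact ⟨0, zero_mem _⟩
  | add x y _ _ hx hy =>
    obtain ⟨a, ha⟩ := hx
    obtain ⟨b, hb⟩ := hy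
    exact ⟨max a b, add_mem (mul_le_mul' (Adeg_mono (le_max_left a b)) le_rfl ha)
      (mul_le_mul' (Adeg_mono (le_max_right a b)) le_rfl hb)⟩
  | smul a x _ hx =>
    obtain ⟨n, hn⟩ := hx
    refine ⟨deg a + n, mul_le_mul' (Adeg_mul_le _ n) le_rfl ?_⟩
    rw [mul_assoc]
    exact Submodule.mul_mem_mul (mem_Adeg_deg a) hn

theorem restrictScalars_span_inf_Adeg (hS : ∀ s ∈ S, s ∈ Adeg g d) (k : ℕ) :
    (Submodule.span (FA g) S).restrictScalars ℝ ⊓ Adeg g (k + d) =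
      Adeg g k * ((Submodule.span (FA g) S).restrictScalars ℝ ⊓ Adeg g d) := by
  set J := Submodule.span (FA g) S
  refine le_antisymm (fun p ⟨hpJ, hp⟩ => ?_) (le_inf (Submodule.mul_le_restrictScalars inf_le_left)
    ((mul_le_mul' le_rfl inf_le_right).trans (Adeg_mul_le k d)))
  obtain ⟨n, hn⟩ := exists_mem_Adeg_mul_of_mem_span hS hpJ
  induction n with
  | zero => exact mul_le_mul' (Adeg_mono (Nat.zero_le k)) le_rfl hn
  | succ n ih =>
    by_cases hnk : n + 1 ≤ k
    · exact mul_le_mul' (Adeg_mono hnk) le_rfl hn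
    rw [Adeg_succ, Submodule.sup_mul] at hn
    obtain ⟨y, hy, r, hr, rfl⟩ := Submodule.mem_sup.1 hn
    have hr' : r ∈ Adeg g (n + d) := (mul_le_mul' le_rfl inf_le_right).trans (Adeg_mul_le n d) hr
    have hy' : y ∈ Adeg g (n + d) := by
      simpa using sub_mem (Adeg_mono (by omega) hp) hr'
    exact ih (add_mem (mem_Adeg_mul_of_mem_AdegH_mul J hy hy') hr)

theorem ellSet_add_eq_AdegH_mul (hS : ∀ s ∈ S, s ∈ Adeg g d) (k : ℕ) :
    ellSet ((Submodule.span (FA g) S).restrictScalars ℝ) (k + d) =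
      AdegH g k * ellSet ((Submodule.span (FA g) S).restrictScalars ℝ) d := by
  rw [ellSet_eq_map, ellSet_eq_map, restrictScalars_span_inf_Adeg hS,
    map_homogeneousComponent_mul le_rfl inf_le_right, map_homogeneousComponent_Adeg]

/-- A leading term shared by `J` and `J*` in degree `n ≥ 2d` is a combination of
`ℓ(p)* h ℓ(q)` with `p, q ∈ J` of degree `d`, which is the leading term of `p* h q ∈ J ∩ J*`. -/
theorem ellSet_inf_ellSet_map_fstarL_le (hS : ∀ s ∈ S, s ∈ Adeg g d) {n : ℕ} (hn : 2 * d ≤ n) :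
    ellSet ((Submodule.span (FA g) S).restrictScalars ℝ) n ⊓
        ellSet (((Submodule.span (FA g) S).restrictScalars ℝ).map (fstarL g)) n ≤
      ellSet ((Submodule.span (FA g) S).restrictScalars ℝ ⊓
        ((Submodule.span (FA g) S).restrictScalars ℝ).map (fstarL g)) n := by
  set J := (Submodule.span (FA g) S).restrictScalars ℝ
  set L := ellSet J d
  obtain ⟨m, rfl⟩ : ∃ m, n = d + m + d := ⟨n - 2 * d, by omega⟩
  have hJ : ellSet J (d + m + d) = AdegH g d * (AdegH g m * L) := by
    rw [← mul_assoc, AdegH_mul_AdegH, ellSet_add_eq_AdegH_mul hS]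
  have hJstar : ellSet (J.map (fstarL g)) (d + m + d) ≤ L.map (fstarL g) * ⊤ := by
    rw [ellSet_map_fstarL, ellSet_add_eq_AdegH_mul hS, map_fstarL_mul]
    exact mul_le_mul' le_rfl le_top
  set V := J ⊓ Adeg g d
  set V' := J.map (fstarL g) ⊓ Adeg g d
  have hV'A : V' * Adeg g m ≤ Adeg g (d + m) :=
    (mul_le_mul' inf_le_right le_rfl).trans (Adeg_mul_le d m)
  have hprod : L.map (fstarL g) * (AdegH g m * L) =
      (V' * Adeg g m * V).map (homogeneousComponent (d + m + d)) := by
    rw [map_homogeneousComponent_mul hV'A inf_le_right,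
      map_homogeneousComponent_mul inf_le_right le_rfl, map_homogeneousComponent_Adeg,
      ← ellSet_eq_map, ← ellSet_eq_map, ellSet_map_fstarL, mul_assoc]
  have hstar : (V' * Adeg g m * V).map (fstarL g) ≤ J := by
    rw [map_fstarL_mul, map_fstarL_mul]
    refine Submodule.mul_le_restrictScalars (Submodule.mul_le_restrictScalars ?_)
    exact (Submodule.map_mono inf_le_left).trans (map_fstarL_map_fstarL J).le
  have hmem : V' * Adeg g m * V ≤ (J ⊓ J.map (fstarL g)) ⊓ Adeg g (d + m + d) :=
    le_inf (le_inf (Submodule.mul_le_restrictScalars inf_le_left)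
      (map_fstarL_map_fstarL (V' * Adeg g m * V) ▸ Submodule.map_mono hstar))
      ((mul_le_mul' hV'A inf_le_right).trans (Adeg_mul_le _ d))
  calc ellSet J (d + m + d) ⊓ ellSet (J.map (fstarL g)) (d + m + d)
      ≤ AdegH g d * (AdegH g m * L) ⊓ L.map (fstarL g) * ⊤ := inf_le_inf hJ.le hJstar
    _ ≤ L.map (fstarL g) * (AdegH g m * L) :=
      AdegH_mul_inf_mul_top_le (map_fstarL_le_AdegH (ellSet_le_AdegH J d))
    _ ≤ ellSet (J ⊓ J.map (fstarL g)) (d + m + d) := by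
      rw [hprod, ellSet_eq_map]
      exact Submodule.map_mono hmem

end Generation

section Blocks

variable {X₁ X₂ Y₁ Y₂ : Submodule ℝ (FA g)} {d : ℕ}

lemma mul_mul_le_mul_top (X M Y : Submodule ℝ (FA g)) : X * M * Y ≤ X * ⊤ := by
  rw [mul_assoc]
  exact mul_le_mul' le_rfl le_top

lemma mul_mul_le_top_mul (X M Y : Submodule ℝ (FA g)) : X * M * Y ≤ ⊤ * Y :=
  mul_le_mul' le_top le_rfl

lemma eq_zero_of_mem_blocks_of_add_eq_zero (hX₁ : X₁ ≤ AdegH g d) (hX₂ : X₂ ≤ AdegH g d)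
    (hX : Disjoint X₁ X₂) (hY₁ : Y₁ ≤ AdegH g d) (hY₂ : Y₂ ≤ AdegH g d) (hY : Disjoint Y₁ Y₂)
    (M : Submodule ℝ (FA g)) :
    ∀ w₁ ∈ X₁ * M * Y₁, ∀ w₂ ∈ X₂ * M * Y₁, ∀ w₃ ∈ X₁ * M * Y₂,
      w₁ + w₂ + w₃ = 0 → w₁ = 0 ∧ w₂ = 0 ∧ w₃ = 0 := by
  intro w₁ h₁ w₂ h₂ w₃ h₃ h
  have hw₂ : w₂ = 0 := by
    refine Submodule.disjoint_def.1 (disjoint_mul_top hX₁ hX₂ hX) w₂ ?_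
      (mul_mul_le_mul_top _ _ _ h₂)
    rw [show w₂ = -(w₁ + w₃) by rw [eq_neg_iff_add_eq_zero, ← h]; abel]
    exact neg_mem (add_mem (mul_mul_le_mul_top _ _ _ h₁) (mul_mul_le_mul_top _ _ _ h₃))
  have hw₁ : w₁ = 0 := by
    refine Submodule.disjoint_def.1 (disjoint_top_mul hY₁ hY₂ hY) w₁
      (mul_mul_le_top_mul _ _ _ h₁) ?_
    rw [show w₁ = -w₃ by rw [eq_neg_iff_add_eq_zero, ← h, hw₂, add_zero]]
    exact neg_mem (mul_mul_le_top_mul _ _ _ h₃)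
  refine ⟨hw₁, hw₂, ?_⟩
  rwa [hw₁, hw₂, zero_add, zero_add] at h

lemma disjoint_blocks (hX₁ : X₁ ≤ AdegH g d) (hX₂ : X₂ ≤ AdegH g d) (hX : Disjoint X₁ X₂)
    (hY₁ : Y₁ ≤ AdegH g d) (hY₂ : Y₂ ≤ AdegH g d) (hY : Disjoint Y₁ Y₂) (M : Submodule ℝ (FA g)) :
    Disjoint (X₁ * M * Y₁ ⊔ X₂ * M * Y₁ ⊔ X₁ * M * Y₂) (X₂ * M * Y₂) := by
  refine Submodule.disjoint_def.2 fun θ hθ h₄ => ?_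
  obtain ⟨t, ht, w₃, h₃, rfl⟩ := Submodule.mem_sup.1 hθ
  obtain ⟨w₁, h₁, w₂, h₂, rfl⟩ := Submodule.mem_sup.1 ht
  have h₁₃ : w₁ + w₃ = 0 := by
    refine Submodule.disjoint_def.1 (disjoint_mul_top hX₁ hX₂ hX) _
      (add_mem (mul_mul_le_mul_top _ _ _ h₁) (mul_mul_le_mul_top _ _ _ h₃)) ?_
    rw [show w₁ + w₃ = w₁ + w₂ + w₃ - w₂ by abel]
    exact sub_mem (mul_mul_le_mul_top _ _ _ h₄) (mul_mul_le_mul_top _ _ _ h₂)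
  rw [add_right_comm, h₁₃, zero_add] at h₄ ⊢
  exact Submodule.disjoint_def.1 (disjoint_top_mul hY₁ hY₂ hY) w₂ (mul_mul_le_top_mul _ _ _ h₂)
    (mul_mul_le_top_mul _ _ _ h₄)

end Blocks

end FA

open FA in
theorem stmt8_general (g d : ℕ) (S : Set (FA g)) (hSdeg : ∀ s ∈ S, s ∈ Adeg g d)
    (I : Submodule (FA g) (FA g)) (hI : I = Submodule.span (FA g) S)
    (G : Submodule ℝ (FA g))
    (hdisj : Disjoint (ellSet (I.restrictScalars ℝ) d) G)
    (hsum : ellSet (I.restrictScalars ℝ) d ⊔ G = AdegH g d)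
    (D : ℕ) (hD : d ≤ D) :
    ellSet (I.restrictScalars ℝ ⊔ (I.restrictScalars ℝ).map (fstarL g)) (2 * D) =
        ((ellSet (I.restrictScalars ℝ) d).map (fstarL g) * AdegH g (2 * (D - d)) *
            ellSet (I.restrictScalars ℝ) d) ⊔
          (G.map (fstarL g) * AdegH g (2 * (D - d)) * ellSet (I.restrictScalars ℝ) d) ⊔
          ((ellSet (I.restrictScalars ℝ) d).map (fstarL g) * AdegH g (2 * (D - d)) * G) ∧
      -- the displayed sum is direct
      (∀ w₁ ∈ (ellSet (I.restrictScalars ℝ) d).map (fstarL g) * AdegH g (2 * (D - d)) *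
            ellSet (I.restrictScalars ℝ) d,
        ∀ w₂ ∈ G.map (fstarL g) * AdegH g (2 * (D - d)) * ellSet (I.restrictScalars ℝ) d,
        ∀ w₃ ∈ (ellSet (I.restrictScalars ℝ) d).map (fstarL g) * AdegH g (2 * (D - d)) * G,
          w₁ + w₂ + w₃ = 0 → w₁ = 0 ∧ w₂ = 0 ∧ w₃ = 0) ∧
      -- consequently `𝒜^H_{2D} = (I + I*)^ℓ_{2D} ⊕ G* 𝒜^H_{2(D−d)} G`
      AdegH g (2 * D) =
        ellSet (I.restrictScalars ℝ ⊔ (I.restrictScalars ℝ).map (fstarL g)) (2 * D) ⊔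
          (G.map (fstarL g) * AdegH g (2 * (D - d)) * G) ∧
      Disjoint (ellSet (I.restrictScalars ℝ ⊔ (I.restrictScalars ℝ).map (fstarL g)) (2 * D))
        (G.map (fstarL g) * AdegH g (2 * (D - d)) * G) := by
  subst hI
  set J := (Submodule.span (FA g) S).restrictScalars ℝ
  set L := ellSet J d
  set M := AdegH g (2 * (D - d))
  have hL : L ≤ AdegH g d := le_sup_left.trans hsum.le
  have hG : G ≤ AdegH g d := le_sup_right.trans hsum.le
  have hsum' : L.map (fstarL g) ⊔ G.map (fstarL g) = AdegH g d := by
    rw [← Submodule.map_sup, hsum, map_fstarL_AdegH]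
  have h2D : 2 * D = d + 2 * (D - d) + d := by omega
  have hJ : ellSet J (2 * D) = AdegH g d * M * L := by
    rw [h2D, ellSet_add_eq_AdegH_mul hSdeg, AdegH_mul_AdegH]
  have hJstar : ellSet (J.map (fstarL g)) (2 * D) = L.map (fstarL g) * M * AdegH g d := by
    rw [ellSet_map_fstarL, hJ, map_fstarL_mul, map_fstarL_mul, map_fstarL_AdegH, map_fstarL_AdegH,
      mul_assoc]
  have h₁ : ellSet (J ⊔ J.map (fstarL g)) (2 * D) =
      L.map (fstarL g) * M * L ⊔ G.map (fstarL g) * M * L ⊔ L.map (fstarL g) * M * G := by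
    rw [ellSet_sup fun m hm => ellSet_inf_ellSet_map_fstarL_le hSdeg (by omega), hJ, ← hsum',
      hJstar, ← hsum]
    simp only [Submodule.sup_mul, Submodule.mul_sup]
    rw [← sup_sup_distrib_left, sup_assoc]
  have hH : AdegH g (2 * D) = (L.map (fstarL g) ⊔ G.map (fstarL g)) * M * (L ⊔ G) := by
    rw [hsum', hsum, h2D, AdegH_mul_AdegH, AdegH_mul_AdegH]
  have hL' := map_fstarL_le_AdegH hL
  have hG' := map_fstarL_le_AdegH hG
  have hdisj' := Submodule.disjoint_map fstarL_injective hdisj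
  refine ⟨h₁, eq_zero_of_mem_blocks_of_add_eq_zero hL' hG' hdisj' hL hG hdisj M, ?_,
    h₁ ▸ disjoint_blocks hL' hG' hdisj' hL hG hdisj M⟩
  rw [h₁, hH]
  simp only [Submodule.sup_mul, Submodule.mul_sup]
  ac_rfl

/-- Lemma on the leading space of `I + I*`: with `𝒜^H_d = I^ℓ_d ⊕ G` and `D ≥ d`,
`(I + I*)^ℓ_{2D} = (I^ℓ_d)* 𝒜^H_{2(D−d)} I^ℓ_d ⊕ G* 𝒜^H_{2(D−d)} I^ℓ_d ⊕
(I^ℓ_d)* 𝒜^H_{2(D−d)} G`, and `𝒜^H_{2D} = (I + I*)^ℓ_{2D} ⊕ G* 𝒜^H_{2(D−d)} G`. -/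
theorem stmt8 (g d : ℕ) (S : Set (FA g)) (hSdeg : ∀ s ∈ S, s ∈ Adeg g d)
    (I : Submodule (FA g) (FA g)) (hI : I = Submodule.span (FA g) S)
    (G : Submodule ℝ (FA g)) (hG : G ≤ AdegH g d)
    (hdisj : Disjoint (ellSet (I.restrictScalars ℝ) d) G)
    (hsum : ellSet (I.restrictScalars ℝ) d ⊔ G = AdegH g d)
    (D : ℕ) (hD : d ≤ D) :
    ellSet (I.restrictScalars ℝ ⊔ (I.restrictScalars ℝ).map (fstarL g)) (2 * D) =
        ((ellSet (I.restrictScalars ℝ) d).map (fstarL g) * AdegH g (2 * (D - d)) *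
            ellSet (I.restrictScalars ℝ) d) ⊔
          (G.map (fstarL g) * AdegH g (2 * (D - d)) * ellSet (I.restrictScalars ℝ) d) ⊔
          ((ellSet (I.restrictScalars ℝ) d).map (fstarL g) * AdegH g (2 * (D - d)) * G) ∧
      -- the displayed sum is direct
      (∀ w₁ ∈ (ellSet (I.restrictScalars ℝ) d).map (fstarL g) * AdegH g (2 * (D - d)) *
            ellSet (I.restrictScalars ℝ) d,
        ∀ w₂ ∈ G.map (fstarL g) * AdegH g (2 * (D - d)) * ellSet (I.restrictScalars ℝ) d,
        ∀ w₃ ∈ (ellSet (I.restrictScalars ℝ) d).map (fstarL g) * AdegH g (2 * (D - d)) * G,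
          w₁ + w₂ + w₃ = 0 → w₁ = 0 ∧ w₂ = 0 ∧ w₃ = 0) ∧
      -- consequently `𝒜^H_{2D} = (I + I*)^ℓ_{2D} ⊕ G* 𝒜^H_{2(D−d)} G`
      AdegH g (2 * D) =
        ellSet (I.restrictScalars ℝ ⊔ (I.restrictScalars ℝ).map (fstarL g)) (2 * D) ⊔
          (G.map (fstarL g) * AdegH g (2 * (D - d)) * G) ∧
      Disjoint (ellSet (I.restrictScalars ℝ ⊔ (I.restrictScalars ℝ).map (fstarL g)) (2 * D))
        (G.map (fstarL g) * AdegH g (2 * (D - d)) * G) :=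
  stmt8_general g d S hSdeg I hI G hdisj hsum D hD

end
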